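/- arXiv:1804.03206 — 2 statements merged into one kernel-verified Lean document; each statement's English description precedes it below -/
import Mathlib

section
/- For n ≥ 1, consider the family of Boolean-valued classifiers on ordered pairs of distinct elements of Fin n of the form c_π(i, j) = decide (π i < π j), indexed by all permutations π of Fin n. If T is a finite set of ordered pairs (i, j) ∈ Fin n × Fin n with i ≠ j such that for every labeling g : T → Bool there exists a permutation π of Fin n with decide (π i < π j) = g (i, j) for all (i, j) ∈ T (i.e., the family shatters T), then |T| ≤ n − 1. Hence the VC dimension of this family is at most n − 1. -/
/-!
For a pair `p = (a, b)` let `v_p = e_b - e_a ∈ ℚⁿ`. If `T` is shattered, then for every sign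
pattern on `T` some permutation `π` orders each pair of `T` as prescribed, so the functional
`x ↦ ∑ π(i) xᵢ` has the prescribed sign on every `v_p`. Such a family of vectors is linearly
independent: a functional of the same signs as the coefficients of a dependence turns it into a
vanishing sum of nonnegative terms. All `v_p` lie in the hyperplane `∑ xᵢ = 0` of dimension
`n - 1`, whence `|T| ≤ n - 1`.
-/

open Module

section LinearAlgebra

variable {K V ι : Type*} [Field K] [AddCommGroup V] [Module K V]

theorem LinearIndepOn.card_le_finrank_sub_one {v : ι → V} {s : Finset ι}
    (hv : LinearIndepOn K v s) [FiniteDimensional K V] {f : Dual K V} (hf : f ≠ 0)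
    (hs : ∀ i ∈ s, f (v i) = 0) :
    s.card ≤ finrank K V - 1 := by
  have hker : LinearIndependent K (fun i : s => (⟨v i, hs i i.2⟩ : LinearMap.ker f)) :=
    .of_comp (LinearMap.ker f).subtype hv
  have hcard := hker.fintype_card_le_finrank
  rw [Fintype.card_coe] at hcard
  have hrank := f.finrank_ker_add_one_of_ne_zero hf
  omega

variable [LinearOrder K] [IsStrictOrderedRing K]

theorem linearIndepOn_of_forall_exists_dual_sign {v : ι → V} {s : Finset ι}
    (h : ∀ S : Set ι, ∃ L : Dual K V, ∀ i ∈ s, (i ∈ S → 0 < L (v i)) ∧ (i ∉ S → L (v i) < 0)) :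
    LinearIndepOn K v s := by
  refine linearIndepOn_finset_iff.2 fun c hc => ?_
  obtain ⟨L, hL⟩ := h {i | 0 < c i}
  have hL_ne : ∀ i ∈ s, L (v i) ≠ 0 := fun i hi => by
    by_cases hci : 0 < c i
    · exact ((hL i hi).1 hci).ne'
    · exact ((hL i hi).2 hci).ne
  have hterm : ∀ i ∈ s, 0 ≤ c i * L (v i) := fun i hi => by
    by_cases hci : 0 < c i
    · exact mul_nonneg hci.le ((hL i hi).1 hci).le
    · exact mul_nonneg_of_nonpos_of_nonpos (not_lt.1 hci) ((hL i hi).2 hci).le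
  have hsum : ∑ i ∈ s, c i * L (v i) = 0 := by
    simpa only [map_sum, map_smul, smul_eq_mul, map_zero] using congrArg L hc
  intro i hi
  exact (mul_eq_zero.1 ((Finset.sum_eq_zero_iff_of_nonneg hterm).1 hsum i hi)).resolve_right
    (hL_ne i hi)

end LinearAlgebra

section Incidence

variable {K α : Type*} [Fintype α] [DecidableEq α]

variable (K) in
def pairVec [CommRing K] (p : α × α) : α → K := Pi.single p.2 1 - Pi.single p.1 1

theorem dotProduct_pairVec [CommRing K] (w : α → K) (p : α × α) :
    w ⬝ᵥ pairVec K p = w p.2 - w p.1 := by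
  simp [pairVec, dotProduct_sub, dotProduct_single]

theorem Finset.card_le_card_sub_one_of_orientations_realized [Field K] [LinearOrder K]
    [IsStrictOrderedRing K] [Nonempty α] (T : Finset (α × α))
    (h : ∀ S : Set (α × α), ∃ φ : α → K,
      ∀ p ∈ T, (p ∈ S → φ p.1 < φ p.2) ∧ (p ∉ S → φ p.2 < φ p.1)) :
    T.card ≤ Fintype.card α - 1 := by
  have hv : LinearIndepOn K (pairVec K) (T : Set (α × α)) :=
    linearIndepOn_of_forall_exists_dual_sign fun S => by
      obtain ⟨φ, hφ⟩ := h S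
      refine ⟨dotProductEquiv K α φ, fun p hp => ?_⟩
      simpa only [dotProductEquiv_apply_apply, dotProduct_pairVec, sub_pos, sub_neg] using hφ p hp
  have hsum_ne : dotProductEquiv K α 1 ≠ 0 := (dotProductEquiv K α).map_ne_zero_iff.2 one_ne_zero
  have hsum_pairVec : ∀ p ∈ T, dotProductEquiv K α 1 (pairVec K p) = 0 := fun p _ => by
    simp only [dotProductEquiv_apply_apply, dotProduct_pairVec, Pi.one_apply, sub_self]
  simpa only [Module.finrank_fintype_fun_eq_card] using
    hv.card_le_finrank_sub_one hsum_ne hsum_pairVec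

end Incidence

/-- The family of classifiers `(i,j) ↦ decide (π i < π j)` on ordered pairs of
distinct elements of `Fin n`, indexed by permutations `π` of `Fin n`, has
VC dimension at most `n - 1`: any finite set `T` of pairs of distinct elements
that it shatters satisfies `|T| ≤ n - 1`. -/
theorem vc_dim_order_classifiers_le (n : ℕ) (hn : 1 ≤ n) (T : Finset (Fin n × Fin n))
    (hdist : ∀ p ∈ T, p.1 ≠ p.2)
    (hshatter : ∀ g : Fin n × Fin n → Bool, ∃ π : Equiv.Perm (Fin n),
      ∀ p ∈ T, decide (π p.1 < π p.2) = g p) :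
    T.card ≤ n - 1 := by
  have : Nonempty (Fin n) := ⟨⟨0, hn⟩⟩
  simpa only [Fintype.card_fin] using
    T.card_le_card_sub_one_of_orientations_realized (K := ℚ) fun S => by
      classical
      obtain ⟨π, hπ⟩ := hshatter fun p => decide (p ∈ S)
      refine ⟨fun a => ((π a : ℕ) : ℚ), fun p hp => ?_⟩
      have hiff : π p.1 < π p.2 ↔ p ∈ S := decide_eq_decide.1 (hπ p hp)
      have hne : π p.2 ≠ π p.1 := π.injective.ne (hdist p hp).symm
      simp only [Nat.cast_lt, ← Fin.lt_def]
      exact ⟨hiff.2, fun hpS => (not_lt.1 (mt hiff.1 hpS)).lt_of_ne hne⟩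
end

section
/- Let r : Fin 3 → Fin 3 → Prop be a relation that is acyclic (there exists a permutation π of Fin 3 with r i j → π i < π j) and has exactly three edges (the set {(i, j) | r i j} has cardinality 3). Then there exist a node k and two distinct nodes i, j, both different from k, such that r k i and r k j; that is, some node is a direct common parent of the other two, so at least one pair of nodes is confounded. -/
/-- Every DAG on three nodes with exactly three edges has a node that is a direct
common parent of the other two nodes, i.e. some pair of nodes is confounded. -/
theorem three_edge_dag_has_common_parent (r : Fin 3 → Fin 3 → Prop)
    (hacyc : ∃ π : Equiv.Perm (Fin 3), ∀ i j, r i j → π i < π j)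
    (hcard : {p : Fin 3 × Fin 3 | r p.1 p.2}.ncard = 3) :
    ∃ k i j : Fin 3, i ≠ j ∧ k ≠ i ∧ k ≠ j ∧ r k i ∧ r k j := by
  obtain ⟨π, hπ⟩ := hacyc
  set E : Set (Fin 3 × Fin 3) := {p | r p.1 p.2} with hE
  set f : Fin 3 × Fin 3 → Fin 3 × Fin 3 := fun p => (π p.1, π p.2) with hf
  have hinj : Function.Injective f := by
    intro p q h
    simp only [hf, Prod.mk.injEq] at h
    exact Prod.ext (π.injective h.1) (π.injective h.2)
  set T : Set (Fin 3 × Fin 3) := {q | q.1 < q.2} with hT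
  have hTcard : T.ncard = 3 := by
    have : T = ↑(({(0,1),(0,2),(1,2)} : Finset (Fin 3 × Fin 3))) := by
      ext ⟨a, b⟩
      simp only [hT, Set.mem_setOf_eq, Finset.coe_insert, Finset.coe_singleton,
        Set.mem_insert_iff, Set.mem_singleton_iff, Prod.mk.injEq]
      fin_cases a <;> fin_cases b <;> decide
    rw [this, Set.ncard_coe_finset]
    decide
  have hsub : f '' E ⊆ T := by
    rintro q ⟨p, hp, rfl⟩
    exact hπ _ _ hp
  have himg : (f '' E).ncard = 3 := by
    rw [Set.ncard_image_of_injective _ hinj, hcard]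
  have heq : f '' E = T := Set.eq_of_subset_of_ncard_le hsub (by omega) T.toFinite
  have h1 : ((0 : Fin 3), (1 : Fin 3)) ∈ f '' E := by rw [heq]; decide
  have h2 : ((0 : Fin 3), (2 : Fin 3)) ∈ f '' E := by rw [heq]; decide
  obtain ⟨⟨a, b⟩, hab, habeq⟩ := h1
  obtain ⟨⟨c, d⟩, hcd, hcdeq⟩ := h2
  simp only [hf, Prod.mk.injEq] at habeq hcdeq
  have hac : a = c := π.injective (habeq.1.trans hcdeq.1.symm)
  refine ⟨a, b, d, ?_, ?_, ?_, hab, hac ▸ hcd⟩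
  · intro h; subst h; exact absurd (habeq.2.symm.trans hcdeq.2) (by decide)
  · intro h; subst h; exact absurd (habeq.1.symm.trans habeq.2) (by decide)
  · intro h; subst h; exact absurd (habeq.1.symm.trans hcdeq.2) (by decide)
end
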